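/- For q = kd/2 and any even partition Q of the index set 𝓘 = {(j,s) : j ∈ [2ℓ], s ∈ [d]}, and any Q-valid collection of tuples {I_j} ⊂ [n]^q, the number of collections of permutations {σ_j}_{j=1}^{2ℓ} ⊂ S_q such that Par({I_j}, {id}, {σ_j}) = Q is at most (kd/2)^{k|Q|/2} · ∏_{j=1}^{2ℓ} hist(I_j)!. -/

import Mathlib

/-- `hist(I)!`, the product of factorials of the multiplicities in the tuple `I`. -/
def histFact {n : ℕ} {ι : Type*} [Fintype ι] [DecidableEq ι] (I : ι → Fin n) : ℕ :=
  ∏ i : Fin n, (Finset.univ.filter (fun j => I j = i)).card.factorial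

/-- The key of an index `(j,s)`: the unordered pair `{U_{j,s}, σ_j(U_{j+1,s})}`
of `(k/2)`-tuples, where `I_j = (U_{j,1},…,U_{j,d})` and `j+1` is cyclic in `Fin (2ℓ)`. -/
def pairKey {n k d l : ℕ} [NeZero (2 * l)]
    (Is : Fin (2 * l) → (Fin d × Fin (k / 2) → Fin n))
    (σ : Fin (2 * l) → Equiv.Perm (Fin d × Fin (k / 2)))
    (p : Fin (2 * l) × Fin d) : Sym2 (Fin (k / 2) → Fin n) :=
  Sym2.mk (fun t => Is p.1 (p.2, t)) (fun t => Is (p.1 + 1) (σ p.1 (p.2, t)))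

/-- `Par({I_j},{id},{σ_j})`: the partition of `{(j,s) : j ∈ [2ℓ], s ∈ [d]}` induced by
equality (up to swap) of the pairs `(U_{j,s}, σ_j(U_{j+1,s}))`. -/
def Par {n k d l : ℕ} [NeZero (2 * l)]
    (Is : Fin (2 * l) → (Fin d × Fin (k / 2) → Fin n))
    (σ : Fin (2 * l) → Equiv.Perm (Fin d × Fin (k / 2))) :
    Setoid (Fin (2 * l) × Fin d) :=
  Setoid.ker (pairKey Is σ)

/-!
Record for each `σ` the values of `σ_j` on the block `U_{j,s}` of one fixed representative
`(j, s)` of every class of `Q`: there are at most `(kd/2)^{(k/2)|Q|}` such records. Among the `σ` with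
`Par = Q` and a given record, the pair keys are constant on classes and their first halves
`U_{j,s}` do not depend on `σ`, so the record determines every `I_{j+1} ∘ σ_j`. The
permutations with prescribed `I_{j+1} ∘ σ_j` form a coset of the stabiliser of `I_{j+1}`, which
has order `hist(I_{j+1})!`.
-/

open Equiv Finset

theorem card_perm_comp_eq_le {α : Type*} [Fintype α] [DecidableEq α] {n : ℕ} (f g : α → Fin n) :
    Nat.card {σ : Perm α // f ∘ σ = g} ≤ histFact f := by
  rcases isEmpty_or_nonempty {σ : Perm α // f ∘ σ = g} with h | ⟨σ₀, hσ₀⟩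
  · simp
  have hinj : Function.Injective fun σ : {σ : Perm α // f ∘ σ = g} =>
      (⟨σ * σ₀⁻¹, by rw [Perm.coe_mul, ← Function.comp_assoc, σ.2, ← hσ₀]; ext; simp⟩ :
        {τ : Perm α // f ∘ τ = f}) :=
    fun σ σ' h => Subtype.ext (mul_right_cancel (congrArg Subtype.val h))
  refine (Nat.card_le_card_of_injective _ hinj).trans_eq ?_
  rw [Nat.card_eq_fintype_card, DomMulAct.stabilizer_card, histFact]
  simp only [Fintype.card_subtype]

theorem card_pi_perm_comp_eq_le {ι α : Type*} [Fintype ι] [Fintype α] [DecidableEq α] {n : ℕ}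
    (f g : ι → α → Fin n) :
    Nat.card {σ : ι → Perm α // ∀ i, f i ∘ σ i = g i} ≤ ∏ i, histFact (f i) := by
  rw [Nat.card_congr (subtypePiEquivPi (p := fun i (σ : Perm α) => f i ∘ σ = g i)), Nat.card_pi]
  exact prod_le_prod' fun i _ => card_perm_comp_eq_le (f i) (g i)

section Pairings

variable {n k d l : ℕ} [NeZero (2 * l)] {Is : Fin (2 * l) → (Fin d × Fin (k / 2) → Fin n)}

noncomputable def repValues (Q : Setoid (Fin (2 * l) × Fin d))
    (σ : Fin (2 * l) → Perm (Fin d × Fin (k / 2))) :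
    Quotient Q → Fin (k / 2) → Fin d × Fin (k / 2) :=
  fun c t => σ c.out.1 (c.out.2, t)

theorem pairKey_eq_iff_right {σ σ' : Fin (2 * l) → Perm (Fin d × Fin (k / 2))}
    {p : Fin (2 * l) × Fin d} :
    pairKey Is σ p = pairKey Is σ' p ↔
      ∀ t, Is (p.1 + 1) (σ p.1 (p.2, t)) = Is (p.1 + 1) (σ' p.1 (p.2, t)) := by
  rw [pairKey, pairKey, Sym2.congr_right, funext_iff]

theorem comp_eq_of_repValues_eq {Q : Setoid (Fin (2 * l) × Fin d)}
    {σ σ' : Fin (2 * l) → Perm (Fin d × Fin (k / 2))} (hσ : Par Is σ = Q) (hσ' : Par Is σ' = Q)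
    (h : repValues Q σ = repValues Q σ') (j : Fin (2 * l)) :
    Is (j + 1) ∘ σ j = Is (j + 1) ∘ σ' j := by
  funext ⟨s, t⟩
  set c : Quotient Q := ⟦(j, s)⟧
  have hc : Q c.out (j, s) := Quotient.exact c.out_eq
  have hkey : pairKey Is σ c.out = pairKey Is σ' c.out :=
    pairKey_eq_iff_right.mpr fun t => congrArg (Is _) (congrFun (congrFun h c) t)
  have hkey' : pairKey Is σ (j, s) = pairKey Is σ' (j, s) := by
    rw [← show Par Is σ c.out (j, s) from hσ ▸ hc, ← show Par Is σ' c.out (j, s) from hσ' ▸ hc]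
    exact hkey
  exact pairKey_eq_iff_right.mp hkey' t

open Classical in
theorem card_fiber_repValues_le (Q : Setoid (Fin (2 * l) × Fin d))
    (a : Quotient Q → Fin (k / 2) → Fin d × Fin (k / 2)) :
    #{σ | Par Is σ = Q ∧ repValues Q σ = a} ≤ ∏ j, histFact (Is (j + 1)) := by
  rcases (filter (fun σ => Par Is σ = Q ∧ repValues Q σ = a) univ).eq_empty_or_nonempty
    with h | ⟨σ₀, hσ₀⟩
  · simp [h]
  simp only [mem_filter, mem_univ, true_and] at hσ₀
  calc #{σ | Par Is σ = Q ∧ repValues Q σ = a}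
      ≤ #{σ : Fin (2 * l) → Perm (Fin d × Fin (k / 2)) |
          ∀ j, Is (j + 1) ∘ σ j = Is (j + 1) ∘ σ₀ j} := by
        refine card_le_card fun σ hσ => ?_
        simp only [mem_filter, mem_univ, true_and] at hσ ⊢
        exact comp_eq_of_repValues_eq hσ.1 hσ₀.1 (hσ.2.trans hσ₀.2.symm)
    _ = Nat.card {σ : Fin (2 * l) → Perm (Fin d × Fin (k / 2)) //
          ∀ j, Is (j + 1) ∘ σ j = Is (j + 1) ∘ σ₀ j} := by
        rw [Nat.card_eq_fintype_card, Fintype.card_subtype]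
    _ ≤ ∏ j, histFact (Is (j + 1)) := card_pi_perm_comp_eq_le _ _

end Pairings

theorem card_sigma_le_general {n k d l M : ℕ} [NeZero (2 * l)] (hk : Even k)
    (Q : Setoid (Fin (2 * l) × Fin d))
    (hM : Nat.card (Quotient Q) = M)
    (Is : Fin (2 * l) → (Fin d × Fin (k / 2) → Fin n)) :
    Nat.card {σ : Fin (2 * l) → Equiv.Perm (Fin d × Fin (k / 2)) // Par Is σ = Q} ≤
      (k * d / 2) ^ (k * M / 2) * ∏ j, histFact (Is j) := by
  classical
  have hk2 : 2 ∣ k := even_iff_two_dvd.mp hk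
  have hreps : Fintype.card (Quotient Q → Fin (k / 2) → Fin d × Fin (k / 2)) =
      (k * d / 2) ^ (k * M / 2) := by
    rw [← Nat.card_eq_fintype_card, Nat.card_fun, Nat.card_fun, Nat.card_prod, hM]
    simp only [Nat.card_eq_fintype_card, Fintype.card_fin]
    rw [← pow_mul, Nat.mul_div_right_comm hk2, Nat.mul_div_right_comm hk2, mul_comm d]
  have hhist : ∏ j, histFact (Is (j + 1)) = ∏ j, histFact (Is j) :=
    Fintype.prod_equiv (Equiv.addRight 1) _ _ fun _ => rfl
  calc Nat.card {σ : Fin (2 * l) → Equiv.Perm (Fin d × Fin (k / 2)) // Par Is σ = Q}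
      = #{σ : Fin (2 * l) → Perm (Fin d × Fin (k / 2)) | Par Is σ = Q} := by
        rw [Nat.card_eq_fintype_card, Fintype.card_subtype]
    _ ≤ (∏ j, histFact (Is (j + 1))) *
          #(univ : Finset (Quotient Q → Fin (k / 2) → Fin d × Fin (k / 2))) :=
        card_le_mul_card_image_of_maps_to (fun σ _ => mem_univ (repValues Q σ)) _
          fun a _ => by rw [filter_filter]; exact card_fiber_repValues_le Q a
    _ = (k * d / 2) ^ (k * M / 2) * ∏ j, histFact (Is j) := by
        rw [card_univ, hreps, hhist, mul_comm]

/-- For an even partition `Q` with `M` blocks and a `Q`-valid collection `{I_j}`,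
the number of collections `{σ_j}` with `Par({I_j},{id},{σ_j}) = Q` is at most
`(kd/2)^{kM/2} · ∏_j hist(I_j)!`. -/
theorem card_sigma_le {n k d l M : ℕ} [NeZero (2 * l)] (hk : Even k)
    (Q : Setoid (Fin (2 * l) × Fin d))
    (hQeven : ∀ a, Even (Nat.card {b // Q.r a b}))
    (hM : Nat.card (Quotient Q) = M)
    (Is : Fin (2 * l) → (Fin d × Fin (k / 2) → Fin n))
    (hvalid : ∃ σ : Fin (2 * l) → Equiv.Perm (Fin d × Fin (k / 2)), Par Is σ = Q) :
    Nat.card {σ : Fin (2 * l) → Equiv.Perm (Fin d × Fin (k / 2)) // Par Is σ = Q} ≤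
      (k * d / 2) ^ (k * M / 2) * ∏ j, histFact (Is j) :=
  card_sigma_le_general hk Q hM Is
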